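/- arXiv:2104.02996 — 12 statements merged into one kernel-verified Lean document; each statement's English description precedes it below -/
import Mathlib

section
/- Let τ be a nonempty set, p ∈ [1,∞), and φ : τ → τ. The generalized shift σ_φ maps ℓ^p(τ) into ℓ^p(τ) if and only if there exists N ∈ ℕ such that for every α ∈ τ the fiber φ⁻¹({α}) has at most N elements. -/
/-!
Measure everything in `ℝ≥0∞`. Grouping the terms of `∑ₐ |x (φ a)|^p` by fibres gives
`∑_b #φ⁻¹{b} · |x b|^p`, so bounded fibres give `‖x ∘ φ‖_p^p ≤ N ‖x‖_p^p`. Conversely, if the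
fibres are unbounded, pick `b n` with `#φ⁻¹{b n} ≥ 2^n` and put mass `2^{-n}` at `b n`: the total
mass is finite, but each `n` contributes at least `1` to the weighted sum.
-/

open scoped ENNReal

theorem memℓp_iff_tsum_enorm_rpow_ne_top {α : Type*} {E : α → Type*}
    [∀ i, NormedAddCommGroup (E i)] {p : ℝ≥0∞} (hp : 0 < p.toReal) {f : ∀ i, E i} :
    Memℓp f p ↔ ∑' i, ‖f i‖ₑ ^ p.toReal ≠ ∞ := by
  simp only [memℓp_gen_iff hp, enorm_eq_nnnorm, ← ENNReal.coe_rpow_of_nonneg _ hp.le,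
    ENNReal.tsum_coe_ne_top_iff_summable_coe, NNReal.coe_rpow, coe_nnnorm]

theorem RCLike.exists_enorm_rpow_eq (𝕜 : Type*) [RCLike 𝕜] {r : ℝ} (hr : 0 < r) {t : ℝ≥0∞}
    (ht : t ≠ ∞) : ∃ z : 𝕜, ‖z‖ₑ ^ r = t := by
  refine ⟨((t.toReal ^ r⁻¹ : ℝ) : 𝕜), ?_⟩
  rw [← ofReal_norm, RCLike.norm_ofReal, abs_of_nonneg (by positivity),
    ENNReal.ofReal_rpow_of_nonneg (by positivity) hr.le,
    Real.rpow_inv_rpow ENNReal.toReal_nonneg hr.ne', ENNReal.ofReal_toReal ht]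

theorem ENNReal.tsum_comp_eq_tsum_encard_mul {α β : Type*} (φ : α → β) (f : β → ℝ≥0∞) :
    ∑' a, f (φ a) = ∑' b, ((φ ⁻¹' {b}).encard : ℝ≥0∞) * f b := by
  rw [← ENNReal.tsum_fiberwise _ φ]
  congr 1 with b
  calc ∑' a : φ ⁻¹' {b}, f (φ a) = ∑' _ : φ ⁻¹' {b}, f b := tsum_congr fun a => by rw [a.2]
    _ = _ := ENNReal.tsum_const _

theorem ENNReal.exists_tsum_ne_top_tsum_mul_eq_top {β : Type*} {w : β → ℝ≥0∞}
    (hw : ∀ n : ℕ, ∃ b, (n : ℝ≥0∞) ≤ w b) :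
    ∃ g : β → ℝ≥0∞, ∑' b, g b ≠ ∞ ∧ ∑' b, w b * g b = ∞ := by
  classical
  choose b hb using fun n : ℕ => hw (2 ^ n)
  refine ⟨fun c => ∑' n, if c = b n then 2⁻¹ ^ n else 0, ?_, ?_⟩
  · rw [ENNReal.tsum_comm]
    simp only [tsum_ite_eq]
    exact (tsum_geometric_lt_top.2 (by norm_num)).ne
  · simp only [← ENNReal.tsum_mul_left, mul_ite, mul_zero]
    rw [ENNReal.tsum_comm]
    simp only [tsum_ite_eq]
    refine top_unique ((ENNReal.tsum_const_eq_top_of_ne_zero one_ne_zero).symm.le.trans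
      (ENNReal.tsum_le_tsum fun n => ?_))
    calc (1 : ℝ≥0∞) = 2 ^ n * 2⁻¹ ^ n := by rw [← mul_pow, ENNReal.mul_inv_cancel] <;> simp
      _ ≤ w (b n) * 2⁻¹ ^ n := by gcongr; exact_mod_cast hb n

theorem stmt_1_general (τ : Type*) (p : ℝ≥0∞) (hp : 1 ≤ p) (hp' : p ≠ ∞) (φ : τ → τ) :
    (∀ x : τ → ℂ, Memℓp x p → Memℓp (fun α => x (φ α)) p) ↔
      ∃ N : ℕ, ∀ α : τ, (φ ⁻¹' {α}).encard ≤ N := by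
  have hr : 0 < p.toReal := ENNReal.toReal_pos (zero_lt_one.trans_le hp).ne' hp'
  simp only [memℓp_iff_tsum_enorm_rpow_ne_top hr,
    ENNReal.tsum_comp_eq_tsum_encard_mul φ fun b => ‖_‖ₑ ^ p.toReal]
  constructor
  · intro H
    by_contra! hunbounded
    obtain ⟨g, hg, hwg⟩ := ENNReal.exists_tsum_ne_top_tsum_mul_eq_top
      (w := fun α => ((φ ⁻¹' {α}).encard : ℝ≥0∞)) fun n => by
        obtain ⟨α, hα⟩ := hunbounded n
        exact ⟨α, by exact_mod_cast hα.le⟩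
    choose x hx using fun b =>
      RCLike.exists_enorm_rpow_eq ℂ hr (ENNReal.ne_top_of_tsum_ne_top hg b)
    exact H x (by simpa only [hx]) (by simpa only [hx])
  · rintro ⟨N, hN⟩ x hx
    refine ne_top_of_le_ne_top (ENNReal.mul_ne_top (ENNReal.natCast_ne_top N) hx) ?_
    calc ∑' b, ((φ ⁻¹' {b}).encard : ℝ≥0∞) * ‖x b‖ₑ ^ p.toReal
        ≤ ∑' b, (N : ℝ≥0∞) * ‖x b‖ₑ ^ p.toReal :=
          ENNReal.tsum_le_tsum fun b => by gcongr; exact_mod_cast hN b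
      _ = N * ∑' b, ‖x b‖ₑ ^ p.toReal := ENNReal.tsum_mul_left

/-- For a nonempty set `τ`, `p ∈ [1,∞)` and a self-map `φ : τ → τ`, the generalized shift
`σ_φ : (x_α)_α ↦ (x_{φ α})_α` maps `ℓ^p(τ)` into `ℓ^p(τ)` if and only if there is `N ∈ ℕ`
bounding the cardinality of every fiber `φ⁻¹({α})`. -/
theorem stmt_1 (τ : Type*) [Nonempty τ] (p : ℝ≥0∞) (hp : 1 ≤ p) (hp' : p ≠ ∞) (φ : τ → τ) :
    (∀ x : τ → ℂ, Memℓp x p → Memℓp (fun α => x (φ α)) p) ↔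
      ∃ N : ℕ, ∀ α : τ, (φ ⁻¹' {α}).encard ≤ N :=
  stmt_1_general τ p hp hp' φ
end

section
/- Let τ be a nonempty set, p ∈ [1,∞), and φ : τ → τ such that there exists N ∈ ℕ with card(φ⁻¹({α})) ≤ N for all α ∈ τ. Then the restriction σ_φ↾ℓ^p(τ) : ℓ^p(τ) → ℓ^p(τ) is a continuous (bounded) linear operator. -/
open scoped ENNReal NNReal

/-! Summing over `α` fibre by fibre of `φ` gives `∑ₐ ‖x (φ a)‖ᵖ ≤ N ∑_b ‖x b‖ᵖ`, so precomposition
with `φ` maps `ℓᵖ` into itself with norm at most `N ^ (1 / p)`. -/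

section FiberBounded

variable {α β : Type*} {φ : α → β} {N : ℕ}

theorem ENNReal.tsum_comp_le_mul_tsum_of_encard_fiber_le
    (hφ : ∀ b, (φ ⁻¹' {b}).encard ≤ N) (g : β → ℝ≥0∞) :
    ∑' a, g (φ a) ≤ N * ∑' b, g b := by
  rw [← ENNReal.tsum_fiberwise (fun a => g (φ a)) φ, ← ENNReal.tsum_mul_left]
  refine ENNReal.tsum_le_tsum fun b => ?_
  calc ∑' a : φ ⁻¹' {b}, g (φ a) = ∑' _ : φ ⁻¹' {b}, g b := tsum_congr fun a => by rw [a.2]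
    _ = (φ ⁻¹' {b}).encard * g b := ENNReal.tsum_set_const _ _
    _ ≤ N * g b := by gcongr; exact_mod_cast hφ b

theorem Summable.comp_and_tsum_comp_le_of_encard_fiber_le
    (hφ : ∀ b, (φ ⁻¹' {b}).encard ≤ N) {f : β → ℝ} (hf0 : 0 ≤ f) (hf : Summable f) :
    Summable (f ∘ φ) ∧ ∑' a, f (φ a) ≤ N * ∑' b, f b := by
  lift f to β → ℝ≥0 using hf0
  rw [NNReal.summable_coe] at hf
  have hle := ENNReal.tsum_comp_le_mul_tsum_of_encard_fiber_le hφ (fun b => (f b : ℝ≥0∞))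
  rw [← ENNReal.coe_tsum hf, ← ENNReal.coe_natCast, ← ENNReal.coe_mul] at hle
  have hs : Summable fun a => f (φ a) :=
    ENNReal.tsum_coe_ne_top_iff_summable.mp (ne_top_of_le_ne_top ENNReal.coe_ne_top hle)
  rw [← ENNReal.coe_tsum hs, ENNReal.coe_le_coe] at hle
  refine ⟨NNReal.summable_coe.mpr hs, ?_⟩
  simpa only [← NNReal.coe_tsum, NNReal.coe_mul, NNReal.coe_natCast] using NNReal.coe_le_coe.mpr hle

variable {E : Type*} [NormedAddCommGroup E] {p : ℝ≥0∞}

theorem Memℓp.comp_of_encard_fiber_le (hp : 0 < p.toReal) (hφ : ∀ b, (φ ⁻¹' {b}).encard ≤ N)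
    {f : β → E} (hf : Memℓp f p) : Memℓp (f ∘ φ) p :=
  memℓp_gen (Summable.comp_and_tsum_comp_le_of_encard_fiber_le hφ
    (fun _ => by positivity) (hf.summable hp)).1

theorem lp.norm_le_of_coe_eq_comp [Fact (1 ≤ p)] (hp : 0 < p.toReal)
    (hφ : ∀ b, (φ ⁻¹' {b}).encard ≤ N) {x : lp (fun _ : β => E) p}
    {y : lp (fun _ : α => E) p} (hy : ⇑y = x ∘ φ) : ‖y‖ ≤ (N : ℝ) ^ (1 / p.toReal) * ‖x‖ := by
  refine lp.norm_le_of_tsum_le hp (by positivity) ?_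
  calc ∑' a, ‖y a‖ ^ p.toReal = ∑' a, ‖x (φ a)‖ ^ p.toReal := by simp only [hy, Function.comp_apply]
    _ ≤ N * ∑' b, ‖x b‖ ^ p.toReal :=
      (Summable.comp_and_tsum_comp_le_of_encard_fiber_le hφ (fun _ => by positivity)
        ((lp.memℓp x).summable hp)).2
    _ = ((N : ℝ) ^ (1 / p.toReal) * ‖x‖) ^ p.toReal := by
      rw [Real.mul_rpow (by positivity) (norm_nonneg _), ← Real.rpow_mul (Nat.cast_nonneg N),
        one_div_mul_cancel hp.ne', Real.rpow_one, lp.norm_rpow_eq_tsum hp]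

variable (𝕜 : Type*) [NormedField 𝕜] [NormedSpace 𝕜 E] [Fact (1 ≤ p)]

noncomputable def lp.funLeft (hp : 0 < p.toReal) (φ : α → β)
    (hφ : ∀ b, (φ ⁻¹' {b}).encard ≤ N) : lp (fun _ : β => E) p →L[𝕜] lp (fun _ : α => E) p :=
  LinearMap.mkContinuous
    { toFun x := ⟨x ∘ φ, (lp.memℓp x).comp_of_encard_fiber_le hp hφ⟩
      map_add' _ _ := rfl
      map_smul' _ _ := rfl }
    ((N : ℝ) ^ (1 / p.toReal)) fun _ => lp.norm_le_of_coe_eq_comp hp hφ rfl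

theorem lp.funLeft_apply (hp : 0 < p.toReal) (hφ : ∀ b, (φ ⁻¹' {b}).encard ≤ N)
    (x : lp (fun _ : β => E) p) (a : α) : lp.funLeft 𝕜 hp φ hφ x a = x (φ a) :=
  rfl

end FiberBounded

theorem stmt_2_general (τ : Type*) (p : ℝ≥0∞) [Fact (1 ≤ p)] (hp' : p ≠ ∞)
    (φ : τ → τ) (N : ℕ) (hφ : ∀ α : τ, (φ ⁻¹' {α}).encard ≤ N) :
    ∃ S : lp (fun _ : τ => ℂ) p →L[ℂ] lp (fun _ : τ => ℂ) p,
      ∀ x : lp (fun _ : τ => ℂ) p, ∀ α : τ, S x α = x (φ α) :=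
  have hp : 0 < p.toReal :=
    ENNReal.toReal_pos (zero_lt_one.trans_le (Fact.out : 1 ≤ p)).ne' hp'
  ⟨lp.funLeft ℂ hp φ hφ, lp.funLeft_apply ℂ hp hφ⟩

/-- If `φ : τ → τ` has fibers of cardinality at most `N`, then the restriction of the
generalized shift `σ_φ` to `ℓ^p(τ)` (for `p ∈ [1,∞)`) is a continuous linear operator:
there is a continuous linear map `S : ℓ^p(τ) → ℓ^p(τ)` with `(S x) α = x (φ α)`. -/
theorem stmt_2 (τ : Type*) [Nonempty τ] (p : ℝ≥0∞) [Fact (1 ≤ p)] (hp' : p ≠ ∞)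
    (φ : τ → τ) (N : ℕ) (hφ : ∀ α : τ, (φ ⁻¹' {α}).encard ≤ N) :
    ∃ S : lp (fun _ : τ => ℂ) p →L[ℂ] lp (fun _ : τ => ℂ) p,
      ∀ x : lp (fun _ : τ => ℂ) p, ∀ α : τ, S x α = x (φ α) :=
  stmt_2_general τ p hp' φ N hφ
end

section
/- Let τ be a nonempty set, p ∈ [1,∞], and φ : τ → τ such that there exists N ∈ ℕ with card(φ⁻¹({α})) ≤ N for all α ∈ τ. Let ψ, λ : ℓ^p(τ) → ℓ^p(τ) be linear maps such that σ_φ↾ℓ^p(τ) is a (ψ,λ)-derivation, i.e., σ_φ(xy) = σ_φ(x)·ψ(y) + λ(x)·σ_φ(y) for all x, y ∈ ℓ^p(τ) (products taken pointwise). Then for all α, β ∈ τ: if φ(α) ≠ β then the α-th coordinate of ψ(w^β) and the α-th coordinate of λ(w^β) are both 0, and if φ(α) = β then π_α(ψ(w^β)) + π_α(λ(w^β)) = 1. -/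
/-!
Evaluate the derivation identity at coordinate `α` on products of unit vectors, where the shift
of `w^β` is the indicator of `φ α = β`. The orthogonal products `w^{φ α} w^β = w^β w^{φ α} = 0`
(for `φ α ≠ β`) isolate the coordinates of `ψ(w^β)` and of `λ(w^β)`, and the idempotent
`w^β w^β = w^β` (for `φ α = β`) gives `1 = ψ(w^β)_α + λ(w^β)_α`.
-/

open scoped ENNReal

section

variable {τ R : Type*} [NormedRing R] {p : ℝ≥0∞}

/-- The paper's `(ψ, λ)`-derivations, for the pointwise product: `ψ` twists the right factor and
`lam` the left one. -/
def IsTwistedDerivation (S ψ lam : lp (fun _ : τ => R) p → lp (fun _ : τ => R) p) : Prop :=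
  ∀ x y z : lp (fun _ : τ => R) p, ⇑z = ⇑x * ⇑y →
    ⇑(S z) = ⇑(S x) * ⇑(ψ y) + ⇑(lam x) * ⇑(S y)

theorem Pi.single_mul_single_of_ne {ι M : Type*} [DecidableEq ι] [MulZeroClass M] {i j : ι}
    (h : i ≠ j) (a b : M) : (Pi.single i a : ι → M) * Pi.single j b = 0 := by
  rw [← Pi.single_mul_left, Pi.single_eq_of_ne h, mul_zero, Pi.single_zero]

variable {S ψ lam : lp (fun _ : τ => R) p → lp (fun _ : τ => R) p} {φ : τ → τ}

theorem shift_apply_zero (hS : ∀ x α, S x α = x (φ α)) (α : τ) : S 0 α = 0 := by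
  rw [hS, lp.coeFn_zero, Pi.zero_apply]

variable [DecidableEq τ] {w : τ → lp (fun _ : τ => R) p}

theorem shift_apply_single (hS : ∀ x α, S x α = x (φ α)) (hw : ∀ β, ⇑(w β) = Pi.single β 1)
    (α β : τ) : S (w β) α = if φ α = β then 1 else 0 := by
  rw [hS, hw, Pi.single_apply]

namespace IsTwistedDerivation

variable (hD : IsTwistedDerivation S ψ lam) (hS : ∀ x α, S x α = x (φ α))
  (hw : ∀ β, ⇑(w β) = Pi.single β 1)
include hD hS hw

theorem right_twist_apply_single_eq_zero {α β : τ} (h : φ α ≠ β) : ψ (w β) α = 0 := by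
  have key := congrFun (hD (w (φ α)) (w β) 0 (by
    rw [lp.coeFn_zero, hw, hw, Pi.single_mul_single_of_ne h])) α
  simpa [shift_apply_zero hS, shift_apply_single hS hw, h] using key.symm

theorem left_twist_apply_single_eq_zero {α β : τ} (h : φ α ≠ β) : lam (w β) α = 0 := by
  have key := congrFun (hD (w β) (w (φ α)) 0 (by
    rw [lp.coeFn_zero, hw, hw, Pi.single_mul_single_of_ne h.symm])) α
  simpa [shift_apply_zero hS, shift_apply_single hS hw, h] using key.symm

theorem right_twist_add_left_twist_apply_single_self (α : τ) :
    ψ (w (φ α)) α + lam (w (φ α)) α = 1 := by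
  have key := congrFun (hD (w (φ α)) (w (φ α)) (w (φ α)) (by
    rw [hw, ← Pi.single_mul, mul_one])) α
  simpa [shift_apply_single hS hw] using key.symm

end IsTwistedDerivation

end

theorem stmt_4_general (τ : Type*) [DecidableEq τ] (p : ℝ≥0∞)
    (φ : τ → τ)
    (S : lp (fun _ : τ => ℂ) p → lp (fun _ : τ => ℂ) p)
    (hS : ∀ x : lp (fun _ : τ => ℂ) p, ∀ α : τ, S x α = x (φ α))
    (ψ lam : lp (fun _ : τ => ℂ) p →ₗ[ℂ] lp (fun _ : τ => ℂ) p)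
    (hder : ∀ x y z : lp (fun _ : τ => ℂ) p, (⇑z = ⇑x * ⇑y) →
      ⇑(S z) = ⇑(S x) * ⇑(ψ y) + ⇑(lam x) * ⇑(S y))
    (w : τ → lp (fun _ : τ => ℂ) p)
    (hw : ∀ β α : τ, w β α = if α = β then (1 : ℂ) else 0) :
    ∀ α β : τ,
      (φ α ≠ β → ψ (w β) α = 0 ∧ lam (w β) α = 0) ∧
      (φ α = β → ψ (w β) α + lam (w β) α = 1) := by
  have hD : IsTwistedDerivation S ψ lam := hder
  have hw' : ∀ β, ⇑(w β) = Pi.single β 1 := fun β =>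
    funext fun α => (hw β α).trans (Pi.single_apply β 1 α).symm
  intro α β
  refine ⟨fun h => ⟨hD.right_twist_apply_single_eq_zero hS hw' h,
    hD.left_twist_apply_single_eq_zero hS hw' h⟩, ?_⟩
  rintro rfl
  exact hD.right_twist_add_left_twist_apply_single_self hS hw' α

/-- Lemma: if `σ_φ↾ℓ^p(τ)` is a `(ψ,λ)`-derivation (where `ψ, λ` are linear), then for
the standard "unit vectors" `w^β` we have: `π_α(ψ(w^β)) = π_α(λ(w^β)) = 0` whenever
`φ α ≠ β`, and `π_α(ψ(w^β)) + π_α(λ(w^β)) = 1` whenever `φ α = β`. -/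
theorem stmt_4 (τ : Type*) [DecidableEq τ] [Nonempty τ] (p : ℝ≥0∞) [Fact (1 ≤ p)]
    (φ : τ → τ) (N : ℕ) (hφ : ∀ α : τ, (φ ⁻¹' {α}).encard ≤ N)
    (S : lp (fun _ : τ => ℂ) p → lp (fun _ : τ => ℂ) p)
    (hS : ∀ x : lp (fun _ : τ => ℂ) p, ∀ α : τ, S x α = x (φ α))
    (ψ lam : lp (fun _ : τ => ℂ) p →ₗ[ℂ] lp (fun _ : τ => ℂ) p)
    (hder : ∀ x y z : lp (fun _ : τ => ℂ) p, (⇑z = ⇑x * ⇑y) →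
      ⇑(S z) = ⇑(S x) * ⇑(ψ y) + ⇑(lam x) * ⇑(S y))
    (w : τ → lp (fun _ : τ => ℂ) p)
    (hw : ∀ β α : τ, w β α = if α = β then (1 : ℂ) else 0) :
    ∀ α β : τ,
      (φ α ≠ β → ψ (w β) α = 0 ∧ lam (w β) α = 0) ∧
      (φ α = β → ψ (w β) α + lam (w β) α = 1) :=
  stmt_4_general τ p φ S hS ψ lam hder w hw
end

section
/- Let τ be a nonempty set, p ∈ [1,∞], and φ : τ → τ such that there exists N ∈ ℕ with card(φ⁻¹({α})) ≤ N for all α ∈ τ. Let ψ, λ : ℓ^p(τ) → ℓ^p(τ) be continuous linear operators. Then σ_φ↾ℓ^p(τ) is a (ψ,λ)-derivation, i.e., σ_φ(xy) = σ_φ(x)·ψ(y) + λ(x)·σ_φ(y) for all x, y ∈ ℓ^p(τ), if and only if there exists r = (r_α)_{α∈τ} ∈ ℂ^τ such that ψ((x_α)_{α∈τ}) = (r_α x_{φ(α)})_{α∈τ} and λ((x_α)_{α∈τ}) = ((1 − r_α) x_{φ(α)})_{α∈τ} for all (x_α)_{α∈τ} ∈ ℓ^p(τ). -/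
open scoped ENNReal

/-! Testing the derivation identity against the standard unit vectors `e_β` suffices: the triples
`(x, e_β, x_β e_β)`, `(e_β, x, x_β e_β)` and `(e_β, e_β, e_β)`, read at a coordinate `α` with
`φ α = β`, give three scalar equations from which `ψ x α` and `λ x α` are solved as multiples of
`x_β`, with coefficients `r_α = ψ(e_β)_α` and `1 - r_α`. -/

namespace lp

variable {τ 𝕜 : Type*} [NormedCommRing 𝕜] {p : ℝ≥0∞}

local notation "ℓ" => lp (fun _ : τ => 𝕜) p

theorem coeFn_single_apply_self_eq_mul_single_one [DecidableEq τ] (x : ℓ)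
    (β : τ) : ⇑(lp.single p β (x β)) = ⇑x * ⇑(lp.single p β 1 : ℓ) := by
  simpa [lp.coeFn_single] using Pi.single_mul_right (i := β) (f := ⇑x) (1 : 𝕜)

theorem coeFn_single_apply_self_eq_single_one_mul [DecidableEq τ] (x : ℓ)
    (β : τ) : ⇑(lp.single p β (x β)) = ⇑(lp.single p β 1 : ℓ) * ⇑x := by
  simpa [lp.coeFn_single] using Pi.single_mul_left (i := β) (f := ⇑x) (1 : 𝕜)

theorem coeFn_single_one_eq_mul_self [DecidableEq τ] (β : τ) :
    ⇑(lp.single p β 1 : ℓ) = ⇑(lp.single p β 1 : ℓ) * ⇑(lp.single p β 1 : ℓ) := by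
  simpa [lp.coeFn_single] using Pi.single_mul (α := fun _ : τ => 𝕜) β 1 1

variable {φ : τ → τ}

theorem apply_eq_mul_comp_of_derivation [DecidableEq τ] {S ψ lam : ℓ → ℓ}
    (hS : ∀ x α, S x α = x (φ α))
    (h : ∀ x y z : ℓ, ⇑z = ⇑x * ⇑y →
      ⇑(S z) = ⇑(S x) * ⇑(ψ y) + ⇑(lam x) * ⇑(S y))
    (x : ℓ) (α : τ) :
    ψ x α = ψ (lp.single p (φ α) 1 : ℓ) α * x (φ α) ∧
      lam x α = (1 - ψ (lp.single p (φ α) 1 : ℓ) α) * x (φ α) := by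
  set e := (lp.single p (φ α) 1 : ℓ)
  have hx_e := congrFun (h x e _ (coeFn_single_apply_self_eq_mul_single_one x (φ α))) α
  have he_x := congrFun (h e x _ (coeFn_single_apply_self_eq_single_one_mul x (φ α))) α
  have he_e := congrFun (h e e e (coeFn_single_one_eq_mul_self (φ α))) α
  simp only [Pi.add_apply, Pi.mul_apply, hS, e, lp.single_apply_self] at hx_e he_x he_e
  exact ⟨by linear_combination -he_x + x (φ α) * he_e, by linear_combination -hx_e⟩

theorem derivation_of_apply_eq_mul_comp {S ψ lam : ℓ → ℓ} (hS : ∀ x α, S x α = x (φ α))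
    (r : τ → 𝕜)
    (hr : ∀ x α, ψ x α = r α * x (φ α) ∧ lam x α = (1 - r α) * x (φ α))
    (x y z : ℓ) (hz : ⇑z = ⇑x * ⇑y) :
    ⇑(S z) = ⇑(S x) * ⇑(ψ y) + ⇑(lam x) * ⇑(S y) := by
  funext α
  simp only [Pi.add_apply, Pi.mul_apply, hS, hz, (hr y α).1, (hr x α).2]
  ring

end lp

theorem stmt_5_general (τ : Type*) (p : ℝ≥0∞) [Fact (1 ≤ p)]
    (φ : τ → τ)
    (S : lp (fun _ : τ => ℂ) p → lp (fun _ : τ => ℂ) p)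
    (hS : ∀ x : lp (fun _ : τ => ℂ) p, ∀ α : τ, S x α = x (φ α))
    (ψ lam : lp (fun _ : τ => ℂ) p →L[ℂ] lp (fun _ : τ => ℂ) p) :
    (∀ x y z : lp (fun _ : τ => ℂ) p, (⇑z = ⇑x * ⇑y) →
        ⇑(S z) = ⇑(S x) * ⇑(ψ y) + ⇑(lam x) * ⇑(S y)) ↔
      ∃ r : τ → ℂ, ∀ x : lp (fun _ : τ => ℂ) p, ∀ α : τ,
        ψ x α = r α * x (φ α) ∧ lam x α = (1 - r α) * x (φ α) := by
  classical
  constructor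
  · intro h
    exact ⟨fun α => ψ (lp.single p (φ α) (1 : ℂ)) α, lp.apply_eq_mul_comp_of_derivation hS h⟩
  · rintro ⟨r, hr⟩
    exact lp.derivation_of_apply_eq_mul_comp hS r hr

/-- Theorem: for continuous linear operators `ψ, λ` on `ℓ^p(τ)`, the generalized shift
`σ_φ↾ℓ^p(τ)` is a `(ψ,λ)`-derivation iff there is `r ∈ ℂ^τ` with
`ψ((x_α)_α) = (r_α x_{φ α})_α` and `λ((x_α)_α) = ((1 - r_α) x_{φ α})_α`. -/
theorem stmt_5 (τ : Type*) [Nonempty τ] (p : ℝ≥0∞) [Fact (1 ≤ p)]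
    (φ : τ → τ) (N : ℕ) (hφ : ∀ α : τ, (φ ⁻¹' {α}).encard ≤ N)
    (S : lp (fun _ : τ => ℂ) p → lp (fun _ : τ => ℂ) p)
    (hS : ∀ x : lp (fun _ : τ => ℂ) p, ∀ α : τ, S x α = x (φ α))
    (ψ lam : lp (fun _ : τ => ℂ) p →L[ℂ] lp (fun _ : τ => ℂ) p) :
    (∀ x y z : lp (fun _ : τ => ℂ) p, (⇑z = ⇑x * ⇑y) →
        ⇑(S z) = ⇑(S x) * ⇑(ψ y) + ⇑(lam x) * ⇑(S y)) ↔
      ∃ r : τ → ℂ, ∀ x : lp (fun _ : τ => ℂ) p, ∀ α : τ,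
        ψ x α = r α * x (φ α) ∧ lam x α = (1 - r α) * x (φ α) :=
  stmt_5_general τ p φ S hS ψ lam
end

section
/- Let τ be a nonempty set, p ∈ [1,∞], and φ : τ → τ such that there exists N ∈ ℕ with card(φ⁻¹({α})) ≤ N for all α ∈ τ. Let ψ : ℓ^p(τ) → ℓ^p(τ) be a linear map such that σ_φ↾ℓ^p(τ) is a ψ-derivation, i.e., σ_φ(xy) = σ_φ(x)·ψ(y) + ψ(x)·σ_φ(y) for all x, y ∈ ℓ^p(τ). Then ψ(w^β) = (1/2)·σ_φ(w^β) for every β ∈ τ. -/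
open scoped ENNReal

/-!
Put `e = w^β`. Since `e² = e`, the derivation identity gives `σ_φ(e) = 2 σ_φ(e) ψ(e)`, so
`ψ(e) = 1/2` wherever `σ_φ(e) = 1`, i.e. on `φ⁻¹{β}`. At a point `α` with `γ := φ α ≠ β` we
have `e · w^γ = 0`, and the derivation identity at `α` collapses to `0 = ψ(e)(α)` because
`σ_φ(e)(α) = 0` and `σ_φ(w^γ)(α) = 1`.
-/

section GeneralizedShift

variable {τ 𝕜 : Type*} [NormedField 𝕜] {p : ℝ≥0∞} {φ : τ → τ}
  {S ψ : lp (fun _ : τ => 𝕜) p → lp (fun _ : τ => 𝕜) p} {w : τ → lp (fun _ : τ => 𝕜) p}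

theorem coe_single_eq_mul_self [DecidableEq τ] (hw : ∀ β α : τ, w β α = if α = β then 1 else 0)
    (β : τ) : ⇑(w β) = ⇑(w β) * ⇑(w β) := by
  funext γ
  by_cases h : γ = β <;> simp [hw, h]

theorem coe_single_mul_single_of_ne [DecidableEq τ]
    (hw : ∀ β α : τ, w β α = if α = β then 1 else 0) {β γ : τ} (hβγ : β ≠ γ) :
    ⇑(0 : lp (fun _ : τ => 𝕜) p) = ⇑(w β) * ⇑(w γ) := by
  funext α
  by_cases h : α = β
  · simp [hw, h, hβγ]
  · simp [hw, h]

theorem shift_single_apply [DecidableEq τ] (hS : ∀ x : lp (fun _ : τ => 𝕜) p, ∀ α, S x α = x (φ α))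
    (hw : ∀ β α : τ, w β α = if α = β then 1 else 0) (β α : τ) :
    S (w β) α = if φ α = β then 1 else 0 := by
  rw [hS, hw]

theorem derivation_single_apply_of_apply_eq [DecidableEq τ] [NeZero (2 : 𝕜)]
    (hS : ∀ x : lp (fun _ : τ => 𝕜) p, ∀ α, S x α = x (φ α))
    (hder : ∀ x y z : lp (fun _ : τ => 𝕜) p, (⇑z = ⇑x * ⇑y) →
      ⇑(S z) = ⇑(S x) * ⇑(ψ y) + ⇑(ψ x) * ⇑(S y))
    (hw : ∀ β α : τ, w β α = if α = β then 1 else 0) {α β : τ} (h : φ α = β) :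
    ψ (w β) α = 1 / 2 := by
  have hSe : S (w β) α = 1 := by simp [shift_single_apply hS hw, h]
  have key := congrFun (hder _ _ _ (coe_single_eq_mul_self hw β)) α
  simp only [Pi.add_apply, Pi.mul_apply, hSe] at key
  field_simp
  linear_combination -key

theorem derivation_single_apply_of_apply_ne [DecidableEq τ]
    (hS : ∀ x : lp (fun _ : τ => 𝕜) p, ∀ α, S x α = x (φ α))
    (hder : ∀ x y z : lp (fun _ : τ => 𝕜) p, (⇑z = ⇑x * ⇑y) →
      ⇑(S z) = ⇑(S x) * ⇑(ψ y) + ⇑(ψ x) * ⇑(S y))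
    (hw : ∀ β α : τ, w β α = if α = β then 1 else 0) {α β : τ} (h : φ α ≠ β) :
    ψ (w β) α = 0 := by
  have hSe : S (w β) α = 0 := by simp [shift_single_apply hS hw, h]
  have hSw : S (w (φ α)) α = 1 := by simp [shift_single_apply hS hw]
  have key := congrFun (hder _ _ _ (coe_single_mul_single_of_ne hw (Ne.symm h))) α
  simp only [Pi.add_apply, Pi.mul_apply, hSe, hSw, hS 0] at key
  simpa using key.symm

end GeneralizedShift

theorem stmt_6_general (τ : Type*) [DecidableEq τ] (p : ℝ≥0∞) [Fact (1 ≤ p)]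
    (φ : τ → τ)
    (S : lp (fun _ : τ => ℂ) p → lp (fun _ : τ => ℂ) p)
    (hS : ∀ x : lp (fun _ : τ => ℂ) p, ∀ α : τ, S x α = x (φ α))
    (ψ : lp (fun _ : τ => ℂ) p →ₗ[ℂ] lp (fun _ : τ => ℂ) p)
    (hder : ∀ x y z : lp (fun _ : τ => ℂ) p, (⇑z = ⇑x * ⇑y) →
      ⇑(S z) = ⇑(S x) * ⇑(ψ y) + ⇑(ψ x) * ⇑(S y))
    (w : τ → lp (fun _ : τ => ℂ) p)
    (hw : ∀ β α : τ, w β α = if α = β then (1 : ℂ) else 0) :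
    ∀ β α : τ, ψ (w β) α = (1 / 2 : ℂ) * S (w β) α := by
  intro β α
  rw [shift_single_apply hS hw]
  by_cases h : φ α = β
  · simp [derivation_single_apply_of_apply_eq hS hder hw h, h]
  · simp [derivation_single_apply_of_apply_ne hS hder hw h, h]

/-- Corollary: if the generalized shift `σ_φ↾ℓ^p(τ)` is a `ψ`-derivation for a linear map
`ψ`, then `ψ(w^β) = (1/2) σ_φ(w^β)` for every `β`. -/
theorem stmt_6 (τ : Type*) [Nonempty τ] [DecidableEq τ] (p : ℝ≥0∞) [Fact (1 ≤ p)]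
    (φ : τ → τ) (N : ℕ) (hφ : ∀ α : τ, (φ ⁻¹' {α}).encard ≤ N)
    (S : lp (fun _ : τ => ℂ) p → lp (fun _ : τ => ℂ) p)
    (hS : ∀ x : lp (fun _ : τ => ℂ) p, ∀ α : τ, S x α = x (φ α))
    (ψ : lp (fun _ : τ => ℂ) p →ₗ[ℂ] lp (fun _ : τ => ℂ) p)
    (hder : ∀ x y z : lp (fun _ : τ => ℂ) p, (⇑z = ⇑x * ⇑y) →
      ⇑(S z) = ⇑(S x) * ⇑(ψ y) + ⇑(ψ x) * ⇑(S y))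
    (w : τ → lp (fun _ : τ => ℂ) p)
    (hw : ∀ β α : τ, w β α = if α = β then (1 : ℂ) else 0) :
    ∀ β α : τ, ψ (w β) α = (1 / 2 : ℂ) * S (w β) α :=
  stmt_6_general τ p φ S hS ψ hder w hw
end

section
/- Let τ be a nonempty set, p ∈ [1,∞], and φ : τ → τ such that there exists N ∈ ℕ with card(φ⁻¹({α})) ≤ N for all α ∈ τ. Let ψ : ℓ^p(τ) → ℓ^p(τ) be a continuous linear operator. Then σ_φ↾ℓ^p(τ) is a ψ-derivation, i.e., σ_φ(xy) = σ_φ(x)·ψ(y) + ψ(x)·σ_φ(y) for all x, y ∈ ℓ^p(τ), if and only if ψ = (1/2)·σ_φ↾ℓ^p(τ). -/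
open scoped ENNReal

theorem lp.coeFn_single_apply_mul_single_one {τ : Type*} [DecidableEq τ] {p : ℝ≥0∞}
    (x : lp (fun _ : τ => ℂ) p) (β : τ) :
    ⇑(lp.single p β (x β)) = ⇑x * ⇑(lp.single (E := fun _ : τ => ℂ) p β 1) := by
  rw [lp.coeFn_single, lp.coeFn_single, ← Pi.single_mul_right, mul_one]

section GeneralizedShift

variable {τ : Type*} {p : ℝ≥0∞} [Fact (1 ≤ p)] {φ : τ → τ}
  {S ψ : lp (fun _ : τ => ℂ) p →L[ℂ] lp (fun _ : τ => ℂ) p}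

/-- Testing the derivation identity on the idempotent `e = single (φ α) 1` gives `ψ e α = 1/2`;
testing it on `x * e = single (φ α) (x (φ α))` then determines `ψ x α`. -/
theorem apply_eq_half_of_isDerivation (hS : ∀ x α, S x α = x (φ α))
    (h : ∀ x y z : lp (fun _ : τ => ℂ) p, (⇑z = ⇑x * ⇑y) →
      ⇑(S z) = ⇑(S x) * ⇑(ψ y) + ⇑(ψ x) * ⇑(S y))
    (x : lp (fun _ : τ => ℂ) p) (α : τ) :
    ψ x α = x (φ α) / 2 := by
  classical
  set e := lp.single (E := fun _ : τ => ℂ) p (φ α) 1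
  have hS_single (c : ℂ) : S (lp.single p (φ α) c) α = c := by
    rw [hS, lp.single_apply_self]
  have hSe : S e α = 1 := hS_single 1
  have hψe : ψ e α = 1 / 2 := by
    have key := congrFun (h e e _ (lp.coeFn_single_apply_mul_single_one e (φ α))) α
    simp only [Pi.add_apply, Pi.mul_apply, hS_single, e, lp.single_apply_self] at key
    linear_combination -key / 2
  have key := congrFun (h x e _ (lp.coeFn_single_apply_mul_single_one x (φ α))) α
  simp only [Pi.add_apply, Pi.mul_apply, hS_single, hSe, hψe, hS] at key
  linear_combination -key

theorem isDerivation_half_smul (hS : ∀ x α, S x α = x (φ α))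
    (x y z : lp (fun _ : τ => ℂ) p) (hz : ⇑z = ⇑x * ⇑y) :
    ⇑(S z) = ⇑(S x) * ⇑(((1 / 2 : ℂ) • S) y) + ⇑(((1 / 2 : ℂ) • S) x) * ⇑(S y) := by
  funext α
  simp only [Pi.add_apply, Pi.mul_apply, smul_apply, lp.coeFn_smul,
    Pi.smul_apply, smul_eq_mul, hS, hz]
  ring

end GeneralizedShift

theorem stmt_7_general (τ : Type*) (p : ℝ≥0∞) [Fact (1 ≤ p)]
    (φ : τ → τ)
    (S : lp (fun _ : τ => ℂ) p →L[ℂ] lp (fun _ : τ => ℂ) p)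
    (hS : ∀ x : lp (fun _ : τ => ℂ) p, ∀ α : τ, S x α = x (φ α))
    (ψ : lp (fun _ : τ => ℂ) p →L[ℂ] lp (fun _ : τ => ℂ) p) :
    (∀ x y z : lp (fun _ : τ => ℂ) p, (⇑z = ⇑x * ⇑y) →
        ⇑(S z) = ⇑(S x) * ⇑(ψ y) + ⇑(ψ x) * ⇑(S y)) ↔
      ψ = (1 / 2 : ℂ) • S := by
  constructor
  · intro h
    ext x α
    rw [apply_eq_half_of_isDerivation hS h, smul_apply, lp.coeFn_smul,
      Pi.smul_apply, hS, smul_eq_mul]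
    ring
  · rintro rfl
    exact isDerivation_half_smul hS

/-- For a continuous linear operator `ψ` on `ℓ^p(τ)`, the generalized shift
`σ_φ↾ℓ^p(τ)` is a `ψ`-derivation iff `ψ = (1/2) σ_φ↾ℓ^p(τ)`. -/
theorem stmt_7 (τ : Type*) [Nonempty τ] (p : ℝ≥0∞) [Fact (1 ≤ p)]
    (φ : τ → τ) (N : ℕ) (hφ : ∀ α : τ, (φ ⁻¹' {α}).encard ≤ N)
    (S : lp (fun _ : τ => ℂ) p →L[ℂ] lp (fun _ : τ => ℂ) p)
    (hS : ∀ x : lp (fun _ : τ => ℂ) p, ∀ α : τ, S x α = x (φ α))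
    (ψ : lp (fun _ : τ => ℂ) p →L[ℂ] lp (fun _ : τ => ℂ) p) :
    (∀ x y z : lp (fun _ : τ => ℂ) p, (⇑z = ⇑x * ⇑y) →
        ⇑(S z) = ⇑(S x) * ⇑(ψ y) + ⇑(ψ x) * ⇑(S y)) ↔
      ψ = (1 / 2 : ℂ) • S :=
  stmt_7_general τ p φ S hS ψ
end

section
/- Let τ be a nonempty set, p ∈ [1,∞], and φ : τ → τ such that there exists N ∈ ℕ with card(φ⁻¹({α})) ≤ N for all α ∈ τ. Then σ_φ↾ℓ^p(τ) is not a Jordan derivation; that is, it is not the case that σ_φ(x²) = σ_φ(x)·x + x·σ_φ(x) for all x ∈ ℓ^p(τ). In particular, σ_φ↾ℓ^p(τ) is not a derivation. -/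
open scoped ENNReal

/-
A Jordan derivation `d` of a commutative ring kills every idempotent `e`: `d e = 2 e · d e`, and
multiplying by `e` gives `e · d e = 2 e · d e`, so `e · d e = 0` and hence `d e = 0`.
But the indicator of `{φ β}` is an idempotent of `ℓ^p(τ)` whose shift by `φ` equals `1` at `β`.
-/

theorem IsIdempotentElem.eq_zero_of_eq_mul_add_mul {R : Type*} [CommRing R] {e d : R}
    (he : IsIdempotentElem e) (hd : d = d * e + e * d) : d = 0 := by
  linear_combination (1 - 2 * e) * hd - 4 * d * he.eq

theorem stmt_8_general (τ : Type*) [Nonempty τ] (p : ℝ≥0∞)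
    (φ : τ → τ)
    (S : lp (fun _ : τ => ℂ) p → lp (fun _ : τ => ℂ) p)
    (hS : ∀ x : lp (fun _ : τ => ℂ) p, ∀ α : τ, S x α = x (φ α)) :
    (¬ ∀ x z : lp (fun _ : τ => ℂ) p, (⇑z = ⇑x * ⇑x) →
        ⇑(S z) = ⇑(S x) * ⇑x + ⇑x * ⇑(S x)) ∧
    (¬ ∀ x y z : lp (fun _ : τ => ℂ) p, (⇑z = ⇑x * ⇑y) →
        ⇑(S z) = ⇑(S x) * ⇑y + ⇑x * ⇑(S y)) := by
  classical
  obtain ⟨β⟩ := ‹Nonempty τ›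
  set e : lp (fun _ : τ => ℂ) p := lp.single p (φ β) 1 with he_def
  have he : IsIdempotentElem (⇑e) := by
    rw [IsIdempotentElem, he_def, lp.coeFn_single, ← Pi.single_mul, one_mul]
  have shift_ne_zero : ⇑(S e) ≠ 0 := fun h => by
    simpa [hS, he_def] using congrFun h β
  have not_jordan : ¬ ∀ x z : lp (fun _ : τ => ℂ) p, (⇑z = ⇑x * ⇑x) →
      ⇑(S z) = ⇑(S x) * ⇑x + ⇑x * ⇑(S x) := fun h =>
    shift_ne_zero (he.eq_zero_of_eq_mul_add_mul (h e e he.symm))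
  exact ⟨not_jordan, fun h => not_jordan fun x z hz => h x x z hz⟩

/-- The generalized shift `σ_φ↾ℓ^p(τ)` is not a Jordan derivation; in particular it is
not a derivation. -/
theorem stmt_8 (τ : Type*) [Nonempty τ] (p : ℝ≥0∞) [Fact (1 ≤ p)]
    (φ : τ → τ) (N : ℕ) (hφ : ∀ α : τ, (φ ⁻¹' {α}).encard ≤ N)
    (S : lp (fun _ : τ => ℂ) p → lp (fun _ : τ => ℂ) p)
    (hS : ∀ x : lp (fun _ : τ => ℂ) p, ∀ α : τ, S x α = x (φ α)) :
    (¬ ∀ x z : lp (fun _ : τ => ℂ) p, (⇑z = ⇑x * ⇑x) →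
        ⇑(S z) = ⇑(S x) * ⇑x + ⇑x * ⇑(S x)) ∧
    (¬ ∀ x y z : lp (fun _ : τ => ℂ) p, (⇑z = ⇑x * ⇑y) →
        ⇑(S z) = ⇑(S x) * ⇑y + ⇑x * ⇑(S y)) :=
  stmt_8_general τ p φ S hS
end

section
/- Let τ be a nonempty set, p ∈ [1,∞], and φ : τ → τ such that there exists N ∈ ℕ with card(φ⁻¹({α})) ≤ N for all α ∈ τ. Then σ_φ↾ℓ^p(τ) is not a Jordan triple derivation; that is, it is not the case that σ_φ(xyx) = σ_φ(x)·y·x + x·σ_φ(y)·x + x·y·σ_φ(x) for all x, y ∈ ℓ^p(τ). -/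
/-!
Test the Jordan triple identity on `x = y = e`, the indicator of `φ α`, which satisfies
`e = e * e * e`. At `α` the left side is `e (φ α) = 1` while the right side is `3 (e α)²`;
but `e α` is a root of `a³ = a`, and no such root has `3 a² = 1`.
-/

open scoped ENNReal

theorem three_mul_sq_ne_one_of_mul_self_mul_self {K : Type*} [Field K] [CharZero K] {a : K}
    (ha : a * a * a = a) : 3 * a ^ 2 ≠ 1 := by
  intro h
  have ha0 : a = 0 := by
    have : (2 : K) * a = 0 := by linear_combination a * h - 3 * ha
    simpa using this
  simp [ha0] at h

theorem lp.coeFn_single_one_mul_self_mul_self {ι : Type*} [DecidableEq ι] (p : ℝ≥0∞) (i : ι) :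
    ⇑(lp.single (E := fun _ : ι => ℂ) p i 1) * ⇑(lp.single (E := fun _ : ι => ℂ) p i 1) *
        ⇑(lp.single (E := fun _ : ι => ℂ) p i 1) =
      ⇑(lp.single (E := fun _ : ι => ℂ) p i 1) := by
  simp only [lp.coeFn_single, ← Pi.single_mul, mul_one]

theorem stmt_9_general (τ : Type*) [Nonempty τ] (p : ℝ≥0∞)
    (φ : τ → τ)
    (S : lp (fun _ : τ => ℂ) p → lp (fun _ : τ => ℂ) p)
    (hS : ∀ x : lp (fun _ : τ => ℂ) p, ∀ α : τ, S x α = x (φ α)) :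
    ¬ ∀ x y z : lp (fun _ : τ => ℂ) p, (⇑z = ⇑x * ⇑y * ⇑x) →
        ⇑(S z) = ⇑(S x) * ⇑y * ⇑x + ⇑x * ⇑(S y) * ⇑x + ⇑x * ⇑y * ⇑(S x) := by
  classical
  intro hJordan
  obtain ⟨α⟩ := ‹Nonempty τ›
  set e := lp.single (E := fun _ : τ => ℂ) p (φ α) 1
  have he : ⇑e * ⇑e * ⇑e = ⇑e := lp.coeFn_single_one_mul_self_mul_self p (φ α)
  have hSe : S e α = 1 := by rw [hS, lp.single_apply_self]
  have key := congrFun (hJordan e e e he.symm) α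
  simp only [Pi.add_apply, Pi.mul_apply, hSe] at key
  refine three_mul_sq_ne_one_of_mul_self_mul_self (congrFun he α) ?_
  linear_combination key.symm

/-- The generalized shift `σ_φ↾ℓ^p(τ)` is not a Jordan triple derivation. -/
theorem stmt_9 (τ : Type*) [Nonempty τ] (p : ℝ≥0∞) [Fact (1 ≤ p)]
    (φ : τ → τ) (N : ℕ) (hφ : ∀ α : τ, (φ ⁻¹' {α}).encard ≤ N)
    (S : lp (fun _ : τ => ℂ) p → lp (fun _ : τ => ℂ) p)
    (hS : ∀ x : lp (fun _ : τ => ℂ) p, ∀ α : τ, S x α = x (φ α)) :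
    ¬ ∀ x y z : lp (fun _ : τ => ℂ) p, (⇑z = ⇑x * ⇑y * ⇑x) →
        ⇑(S z) = ⇑(S x) * ⇑y * ⇑x + ⇑x * ⇑(S y) * ⇑x + ⇑x * ⇑y * ⇑(S x) :=
  stmt_9_general τ p φ S hS
end

section
/- Let τ be a nonempty set, p ∈ [1,∞], and φ : τ → τ such that there exists N ∈ ℕ with card(φ⁻¹({α})) ≤ N for all α ∈ τ. Let d : ℓ^p(τ) → ℓ^p(τ) be a continuous linear operator that is a σ_φ↾ℓ^p(τ)-derivation, i.e., d(xy) = d(x)·σ_φ(y) + σ_φ(x)·d(y) for all x, y ∈ ℓ^p(τ). Then d = 0. -/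
open scoped ENNReal

/-! If `e` is idempotent, the twisted Leibniz rule gives `d e = 2 σ(e) d e` with `σ(e)` idempotent
as well, which forces `d e = 0`. Applying the rule to `x δ_{φ α} = x (φ α) δ_{φ α}` and evaluating
at `α`, where `σ(δ_{φ α})` takes the value `1`, then gives `(d x) α = 0`. -/

theorem eq_zero_of_eq_mul_add_mul_of_isIdempotentElem {R : Type*} [CommRing R] {a b : R}
    (hb : IsIdempotentElem b) (ha : a = a * b + b * a) : a = 0 := by
  have hab : a * b = 0 := by
    linear_combination -b * ha - 2 * a * hb.eq
  rw [ha, hab, mul_comm, hab, add_zero]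

theorem IsIdempotentElem.comp {τ R : Type*} [Mul R] {e : τ → R} (he : IsIdempotentElem e)
    (φ : τ → τ) : IsIdempotentElem (e ∘ φ) :=
  funext fun γ => congrFun he (φ γ)

namespace lp
variable {τ : Type*} [DecidableEq τ] {p : ℝ≥0∞}

theorem isIdempotentElem_coeFn_single_one (i : τ) :
    IsIdempotentElem ⇑(lp.single (E := fun _ : τ => ℂ) p i 1) := by
  rw [lp.coeFn_single, IsIdempotentElem, ← Pi.single_mul, one_mul]

theorem coeFn_smul_single_one [Fact (1 ≤ p)] (x : lp (fun _ : τ => ℂ) p) (i : τ) :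
    ⇑(x i • lp.single p i 1) = ⇑x * ⇑(lp.single p i 1) := by
  rw [lp.coeFn_smul, lp.coeFn_single, ← Pi.single_mul_right, mul_one, ← Pi.single_smul,
    smul_eq_mul, mul_one]

end lp

theorem map_isIdempotentElem_eq_zero_of_twisted_derivation {τ : Type*} {p : ℝ≥0∞} {φ : τ → τ}
    {S : lp (fun _ : τ => ℂ) p → lp (fun _ : τ => ℂ) p}
    (hS : ∀ x : lp (fun _ : τ => ℂ) p, ∀ α : τ, S x α = x (φ α))
    {d : lp (fun _ : τ => ℂ) p → lp (fun _ : τ => ℂ) p}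
    (hder : ∀ x y z : lp (fun _ : τ => ℂ) p, (⇑z = ⇑x * ⇑y) →
      ⇑(d z) = ⇑(d x) * ⇑(S y) + ⇑(S x) * ⇑(d y))
    {e : lp (fun _ : τ => ℂ) p} (he : IsIdempotentElem ⇑e) : ⇑(d e) = 0 := by
  have hSe : ⇑(S e) = ⇑e ∘ φ := funext (hS e)
  refine eq_zero_of_eq_mul_add_mul_of_isIdempotentElem (b := ⇑(S e)) ?_ (hder e e e he.symm)
  rw [hSe]
  exact he.comp φ

theorem stmt_11_general (τ : Type*) (p : ℝ≥0∞) [Fact (1 ≤ p)]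
    (φ : τ → τ)
    (S : lp (fun _ : τ => ℂ) p → lp (fun _ : τ => ℂ) p)
    (hS : ∀ x : lp (fun _ : τ => ℂ) p, ∀ α : τ, S x α = x (φ α))
    (d : lp (fun _ : τ => ℂ) p →L[ℂ] lp (fun _ : τ => ℂ) p)
    (hder : ∀ x y z : lp (fun _ : τ => ℂ) p, (⇑z = ⇑x * ⇑y) →
      ⇑(d z) = ⇑(d x) * ⇑(S y) + ⇑(S x) * ⇑(d y)) :
    d = 0 := by
  classical
  ext x α
  set e := lp.single (E := fun _ : τ => ℂ) p (φ α) 1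
  have hde : ⇑(d e) = 0 :=
    map_isIdempotentElem_eq_zero_of_twisted_derivation hS hder
      (lp.isIdempotentElem_coeFn_single_one _)
  have hxe := congrFun (hder x e _ (lp.coeFn_smul_single_one x (φ α))) α
  simp only [map_smul, lp.coeFn_smul, hde, smul_zero, Pi.add_apply, Pi.mul_apply, hS, e,
    lp.single_apply_self, Pi.zero_apply, mul_one, mul_zero, add_zero] at hxe
  exact hxe.symm

/-- Theorem: if a continuous linear operator `d` on `ℓ^p(τ)` is a
`σ_φ↾ℓ^p(τ)`-derivation, i.e. `d(xy) = d(x)·σ_φ(y) + σ_φ(x)·d(y)`, then `d = 0`. -/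
theorem stmt_11 (τ : Type*) [Nonempty τ] (p : ℝ≥0∞) [Fact (1 ≤ p)]
    (φ : τ → τ) (N : ℕ) (hφ : ∀ α : τ, (φ ⁻¹' {α}).encard ≤ N)
    (S : lp (fun _ : τ => ℂ) p → lp (fun _ : τ => ℂ) p)
    (hS : ∀ x : lp (fun _ : τ => ℂ) p, ∀ α : τ, S x α = x (φ α))
    (d : lp (fun _ : τ => ℂ) p →L[ℂ] lp (fun _ : τ => ℂ) p)
    (hder : ∀ x y z : lp (fun _ : τ => ℂ) p, (⇑z = ⇑x * ⇑y) →
      ⇑(d z) = ⇑(d x) * ⇑(S y) + ⇑(S x) * ⇑(d y)) :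
    d = 0 :=
  stmt_11_general τ p φ S hS d hder
end

section
/- Let τ be a nonempty set, p ∈ [1,∞], and φ : τ → τ such that there exists N ∈ ℕ with card(φ⁻¹({α})) ≤ N for all α ∈ τ. Then σ_φ↾ℓ^p(τ) is a generalized Jordan derivation — i.e., there exists a derivation d : ℓ^p(τ) → ℓ^p(τ) with σ_φ(x²) = σ_φ(x)·x + x·d(x) for all x ∈ ℓ^p(τ) — if and only if φ = id_τ. -/
open scoped ENNReal

/-!
The indicator `e` of `{φ α}` is idempotent, so the identity at `x = e`, read at the index `α`,
says `1 = e (φ α) = e (φ α) * e α + e α * (d e) α`, which is `0` unless `φ α = α`.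
Conversely, for `φ = id` the shift is the identity map and `d = 0` works.
-/

section

variable {τ R : Type*} [NormedRing R] {p : ℝ≥0∞}

theorem lp.coeFn_single_mul_self [DecidableEq τ] (i : τ) {a : R} (ha : IsIdempotentElem a) :
    ⇑(lp.single (E := fun _ => R) p i a) * ⇑(lp.single (E := fun _ => R) p i a) =
      ⇑(lp.single (E := fun _ => R) p i a) := by
  rw [lp.coeFn_single, ← Pi.single_mul, ha.eq]

theorem eq_id_of_shift_sq_eq [Nontrivial R] {φ : τ → τ}
    {S D : lp (fun _ : τ => R) p → lp (fun _ : τ => R) p} (hS : ∀ x α, S x α = x (φ α))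
    (h : ∀ x z : lp (fun _ : τ => R) p, ⇑z = ⇑x * ⇑x → ⇑(S z) = ⇑(S x) * ⇑x + ⇑x * ⇑(D x)) :
    φ = id := by
  classical
  funext α
  by_contra hne
  set e := lp.single (E := fun _ => R) p (φ α) 1
  have he_sq := congrFun (h e e (lp.coeFn_single_mul_self _ IsIdempotentElem.one).symm) α
  have he_φα : e (φ α) = 1 := lp.single_apply_self p (φ α) 1
  have he_α : e α = 0 := lp.single_apply_ne p (φ α) 1 (Ne.symm hne)
  simp only [Pi.add_apply, Pi.mul_apply, hS, he_φα, he_α, zero_mul, mul_zero, add_zero] at he_sq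
  exact one_ne_zero he_sq

end

theorem stmt_15_general (τ : Type*) (p : ℝ≥0∞) (φ : τ → τ)
    (S : lp (fun _ : τ => ℂ) p → lp (fun _ : τ => ℂ) p)
    (hS : ∀ x : lp (fun _ : τ => ℂ) p, ∀ α : τ, S x α = x (φ α)) :
    (∃ d : lp (fun _ : τ => ℂ) p →ₗ[ℂ] lp (fun _ : τ => ℂ) p,
        (∀ x y z : lp (fun _ : τ => ℂ) p, (⇑z = ⇑x * ⇑y) →
          ⇑(d z) = ⇑(d x) * ⇑y + ⇑x * ⇑(d y)) ∧
        (∀ x z : lp (fun _ : τ => ℂ) p, (⇑z = ⇑x * ⇑x) →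
          ⇑(S z) = ⇑(S x) * ⇑x + ⇑x * ⇑(d x))) ↔
      φ = id := by
  refine ⟨fun ⟨d, _, hd⟩ => eq_id_of_shift_sq_eq hS hd, ?_⟩
  rintro rfl
  have hS_id : ∀ x, S x = x := fun x => lp.ext (funext (hS x))
  refine ⟨0, fun x y z _ => ?_, fun x z hz => ?_⟩
  · simp only [LinearMap.zero_apply, lp.coeFn_zero, zero_mul, mul_zero, add_zero]
  · rw [LinearMap.zero_apply, lp.coeFn_zero, hS_id, hS_id, hz]; simp

/-- The generalized shift `σ_φ↾ℓ^p(τ)` is a generalized Jordan derivation (there exists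
a derivation `d` with `σ_φ(x²) = σ_φ(x)·x + x·d(x)`) if and only if `φ = id`. -/
theorem stmt_15 (τ : Type*) [Nonempty τ] (p : ℝ≥0∞) [Fact (1 ≤ p)]
    (φ : τ → τ) (N : ℕ) (hφ : ∀ α : τ, (φ ⁻¹' {α}).encard ≤ N)
    (S : lp (fun _ : τ => ℂ) p → lp (fun _ : τ => ℂ) p)
    (hS : ∀ x : lp (fun _ : τ => ℂ) p, ∀ α : τ, S x α = x (φ α)) :
    (∃ d : lp (fun _ : τ => ℂ) p →ₗ[ℂ] lp (fun _ : τ => ℂ) p,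
        (∀ x y z : lp (fun _ : τ => ℂ) p, (⇑z = ⇑x * ⇑y) →
          ⇑(d z) = ⇑(d x) * ⇑y + ⇑x * ⇑(d y)) ∧
        (∀ x z : lp (fun _ : τ => ℂ) p, (⇑z = ⇑x * ⇑x) →
          ⇑(S z) = ⇑(S x) * ⇑x + ⇑x * ⇑(d x))) ↔
      φ = id :=
  stmt_15_general τ p φ S hS
end

section
/- Let τ be a nonempty set, p ∈ [1,∞], and φ : τ → τ such that there exists N ∈ ℕ with card(φ⁻¹({α})) ≤ N for all α ∈ τ. Then σ_φ↾ℓ^p(τ) is a generalized Jordan triple derivation — i.e., there exists a Jordan triple derivation d : ℓ^p(τ) → ℓ^p(τ) with σ_φ(xyx) = σ_φ(x)·y·x + x·d(y)·x + x·y·d(x) for all x, y ∈ ℓ^p(τ) — if and only if φ = id_τ. -/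
open scoped ENNReal

/-!
If `φ β ≠ β`, test the identity with `x = y = z = e`, the indicator of `φ β`, which satisfies
`e = e³`. At the coordinate `β` the left side is `σ_φ(e)(β) = e(φ β) = 1`, while every term on the
right carries a factor `e(β) = 0`. Conversely, for `φ = id` the shift is the identity and `d = 0`
works.
-/

theorem eq_id_of_generalizedJordanTriple {τ : Type*} {p : ℝ≥0∞} {φ : τ → τ}
    {S d : lp (fun _ : τ => ℂ) p → lp (fun _ : τ => ℂ) p}
    (hS : ∀ x : lp (fun _ : τ => ℂ) p, ∀ α : τ, S x α = x (φ α))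
    (hSd : ∀ x y z : lp (fun _ : τ => ℂ) p, (⇑z = ⇑x * ⇑y * ⇑x) →
      ⇑(S z) = ⇑(S x) * ⇑y * ⇑x + ⇑x * ⇑(d y) * ⇑x + ⇑x * ⇑y * ⇑(d x)) :
    φ = id := by
  classical
  funext β
  by_contra hβ
  set e : lp (fun _ : τ => ℂ) p := lp.single p (φ β) 1
  have he_β : e β = 0 := lp.single_apply_ne p _ _ (Ne.symm hβ)
  have he_φβ : e (φ β) = 1 := lp.single_apply_self p _ _
  have he_cube : ⇑e = ⇑e * ⇑e * ⇑e := by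
    simp only [e, lp.coeFn_single, ← Pi.single_mul, mul_one]
  have h := congrFun (hSd e e e he_cube) β
  simp only [hS, Pi.add_apply, Pi.mul_apply, he_β, he_φβ, mul_zero, zero_mul, add_zero] at h
  exact one_ne_zero h

theorem stmt_16_general (τ : Type*) (p : ℝ≥0∞) [Fact (1 ≤ p)]
    (φ : τ → τ)
    (S : lp (fun _ : τ => ℂ) p → lp (fun _ : τ => ℂ) p)
    (hS : ∀ x : lp (fun _ : τ => ℂ) p, ∀ α : τ, S x α = x (φ α)) :
    (∃ d : lp (fun _ : τ => ℂ) p →ₗ[ℂ] lp (fun _ : τ => ℂ) p,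
        (∀ x y z : lp (fun _ : τ => ℂ) p, (⇑z = ⇑x * ⇑y * ⇑x) →
          ⇑(d z) = ⇑(d x) * ⇑y * ⇑x + ⇑x * ⇑(d y) * ⇑x + ⇑x * ⇑y * ⇑(d x)) ∧
        (∀ x y z : lp (fun _ : τ => ℂ) p, (⇑z = ⇑x * ⇑y * ⇑x) →
          ⇑(S z) = ⇑(S x) * ⇑y * ⇑x + ⇑x * ⇑(d y) * ⇑x + ⇑x * ⇑y * ⇑(d x))) ↔
      φ = id := by
  constructor
  · rintro ⟨d, -, hSd⟩
    exact eq_id_of_generalizedJordanTriple hS hSd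
  · rintro rfl
    have hS_id : ∀ w, ⇑(S w) = ⇑w := fun w => funext (hS w)
    refine ⟨0, fun x y z _ => ?_, fun x y z hz => ?_⟩
    · simp only [LinearMap.zero_apply, lp.coeFn_zero, zero_mul, mul_zero, add_zero]
    · simp only [hS_id, hz, LinearMap.zero_apply, lp.coeFn_zero, mul_zero, zero_mul, add_zero]

/-- The generalized shift `σ_φ↾ℓ^p(τ)` is a generalized Jordan triple derivation (there
exists a Jordan triple derivation `d` with
`σ_φ(xyx) = σ_φ(x)·y·x + x·d(y)·x + x·y·d(x)`) if and only if `φ = id`. -/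
theorem stmt_16 (τ : Type*) [Nonempty τ] (p : ℝ≥0∞) [Fact (1 ≤ p)]
    (φ : τ → τ) (N : ℕ) (hφ : ∀ α : τ, (φ ⁻¹' {α}).encard ≤ N)
    (S : lp (fun _ : τ => ℂ) p → lp (fun _ : τ => ℂ) p)
    (hS : ∀ x : lp (fun _ : τ => ℂ) p, ∀ α : τ, S x α = x (φ α)) :
    (∃ d : lp (fun _ : τ => ℂ) p →ₗ[ℂ] lp (fun _ : τ => ℂ) p,
        (∀ x y z : lp (fun _ : τ => ℂ) p, (⇑z = ⇑x * ⇑y * ⇑x) →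
          ⇑(d z) = ⇑(d x) * ⇑y * ⇑x + ⇑x * ⇑(d y) * ⇑x + ⇑x * ⇑y * ⇑(d x)) ∧
        (∀ x y z : lp (fun _ : τ => ℂ) p, (⇑z = ⇑x * ⇑y * ⇑x) →
          ⇑(S z) = ⇑(S x) * ⇑y * ⇑x + ⇑x * ⇑(d y) * ⇑x + ⇑x * ⇑y * ⇑(d x))) ↔
      φ = id :=
  stmt_16_general τ p φ S hS
end

section
/- Let τ be a nonempty set, p ∈ [1,∞], and φ : τ → τ such that there exists N ∈ ℕ with card(φ⁻¹({α})) ≤ N for all α ∈ τ. Let {d_n}_{n≥0} be a sequence of continuous linear operators on ℓ^p(τ) that is a Jordan higher derivation, i.e., d_n(x²) = Σ_{i+j=n} d_i(x)·d_j(x) for all x ∈ ℓ^p(τ) and all n ≥ 0, and suppose d₀ = σ_φ↾ℓ^p(τ). Then d_n = 0 for every n ≥ 1. -/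
/-!
The lower-order terms of the higher derivation vanish by strong induction, so for `n ≥ 1` the
defining identity collapses to `d_n(x²) = 2 σ_φ(x) d_n(x)`. Polarising this at `x ± e`, where
`e` is the unit vector at `φ α`, and using `x e = x(φ α) e`, the `e`-terms cancel and leave
`4 d_n(x)(α) = 0`.
-/

open scoped ENNReal

namespace lp

variable {ι 𝕜 : Type*} [RCLike 𝕜] {p : ℝ≥0∞}

theorem memℓp_mul (f g : lp (fun _ : ι => 𝕜) p) : Memℓp (⇑f * ⇑g) p :=
  (lp.memℓp f).bilin_of_top_right (fun _ => ContinuousLinearMap.mul 𝕜 𝕜)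
    (fun _ => ContinuousLinearMap.opNorm_mul_le 𝕜 𝕜) ((lp.memℓp g).of_exponent_ge le_top)

theorem coeFn_mul_single_one [DecidableEq ι] (x : lp (fun _ : ι => 𝕜) p) (i : ι) :
    ⇑x * ⇑(lp.single (E := fun _ : ι => 𝕜) p i 1) =
      ⇑(x i • lp.single (E := fun _ : ι => 𝕜) p i 1) := by
  ext j
  rcases eq_or_ne j i with rfl | hj <;> simp [*]

theorem linearMap_eq_zero_of_map_mul_self (φ : ι → ι)
    (D : lp (fun _ : ι => 𝕜) p →ₗ[𝕜] lp (fun _ : ι => 𝕜) p)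
    (hD : ∀ x z : lp (fun _ : ι => 𝕜) p, ⇑z = ⇑x * ⇑x → ∀ α, D z α = 2 * x (φ α) * D x α) :
    D = 0 := by
  classical
  ext x α
  set e := lp.single (E := fun _ : ι => 𝕜) p (φ α) 1
  let zadd : lp (fun _ : ι => 𝕜) p := ⟨_, memℓp_mul (x + e) (x + e)⟩
  let zsub : lp (fun _ : ι => 𝕜) p := ⟨_, memℓp_mul (x - e) (x - e)⟩
  have hdiff : zadd - zsub = (4 * x (φ α)) • e := by
    ext1
    rw [lp.coeFn_sub, mul_smul, lp.coeFn_smul, ← coeFn_mul_single_one]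
    ext j
    simp only [zadd, zsub, lp.coeFn_add, lp.coeFn_sub, Pi.sub_apply, Pi.add_apply,
      Pi.mul_apply, Pi.smul_apply, smul_eq_mul]
    ring
  have hDdiff : D zadd α - D zsub α = 4 * x (φ α) * D e α := by
    simpa only [map_sub, map_smul, lp.coeFn_sub, lp.coeFn_smul, Pi.sub_apply, Pi.smul_apply,
      smul_eq_mul] using congrArg (fun z => D z α) hdiff
  rw [hD (x + e) zadd rfl, hD (x - e) zsub rfl] at hDdiff
  simp only [map_add, map_sub, lp.coeFn_add, lp.coeFn_sub, Pi.add_apply, Pi.sub_apply, e,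
    lp.single_apply_self] at hDdiff
  simp only [LinearMap.zero_apply, lp.coeFn_zero, Pi.zero_apply]
  linear_combination hDdiff / 4

end lp

theorem stmt_18_general (τ : Type*) (p : ℝ≥0∞) [Fact (1 ≤ p)]
    (φ : τ → τ)
    (S : lp (fun _ : τ => ℂ) p →L[ℂ] lp (fun _ : τ => ℂ) p)
    (hS : ∀ x : lp (fun _ : τ => ℂ) p, ∀ α : τ, S x α = x (φ α))
    (d : ℕ → (lp (fun _ : τ => ℂ) p →L[ℂ] lp (fun _ : τ => ℂ) p))
    (hd0 : d 0 = S)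
    (hhigher : ∀ n : ℕ, ∀ x z : lp (fun _ : τ => ℂ) p, (⇑z = ⇑x * ⇑x) →
      ⇑(d n z) = ∑ ij ∈ Finset.HasAntidiagonal.antidiagonal n, ⇑(d ij.1 x) * ⇑(d ij.2 x)) :
    ∀ n : ℕ, 1 ≤ n → d n = 0 := by
  intro n
  induction n using Nat.strong_induction_on with
  | _ n IH =>
  intro hn
  apply ContinuousLinearMap.coe_injective
  rw [ContinuousLinearMap.toLinearMap_zero]
  refine lp.linearMap_eq_zero_of_map_mul_self φ _ fun x z hz α => ?_
  have hsum : ∑ ij ∈ Finset.HasAntidiagonal.antidiagonal n, ⇑(d ij.1 x) * ⇑(d ij.2 x) =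
      ⇑(d 0 x) * ⇑(d n x) + ⇑(d n x) * ⇑(d 0 x) :=
    Finset.sum_eq_add_of_mem (0, n) (n, 0) (by simp) (by simp)
      (by simp only [ne_eq, Prod.mk.injEq]; omega)
      fun ⟨i, j⟩ hij hne => by
        simp only [Finset.HasAntidiagonal.mem_antidiagonal, ne_eq, Prod.mk.injEq] at hij hne
        rw [IH i (by omega) (by omega), _root_.zero_apply, lp.coeFn_zero, zero_mul]
  have h := congrFun (hhigher n x z hz) α
  rw [hsum, hd0] at h
  simp only [Pi.add_apply, Pi.mul_apply, hS] at h
  simp only [ContinuousLinearMap.coe_coe, h]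
  ring

/-- If `(d_n)_{n ≥ 0}` is a Jordan higher derivation consisting of continuous linear
operators on `ℓ^p(τ)` (i.e. `d_n(x²) = Σ_{i+j=n} d_i(x)·d_j(x)`) with
`d_0 = σ_φ↾ℓ^p(τ)`, then `d_n = 0` for all `n ≥ 1`. -/
theorem stmt_18 (τ : Type*) [Nonempty τ] (p : ℝ≥0∞) [Fact (1 ≤ p)]
    (φ : τ → τ) (N : ℕ) (hφ : ∀ α : τ, (φ ⁻¹' {α}).encard ≤ N)
    (S : lp (fun _ : τ => ℂ) p →L[ℂ] lp (fun _ : τ => ℂ) p)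
    (hS : ∀ x : lp (fun _ : τ => ℂ) p, ∀ α : τ, S x α = x (φ α))
    (d : ℕ → (lp (fun _ : τ => ℂ) p →L[ℂ] lp (fun _ : τ => ℂ) p))
    (hd0 : d 0 = S)
    (hhigher : ∀ n : ℕ, ∀ x z : lp (fun _ : τ => ℂ) p, (⇑z = ⇑x * ⇑x) →
      ⇑(d n z) = ∑ ij ∈ Finset.HasAntidiagonal.antidiagonal n, ⇑(d ij.1 x) * ⇑(d ij.2 x)) :
    ∀ n : ℕ, 1 ≤ n → d n = 0 :=
  stmt_18_general τ p φ S hS d hd0 hhigher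
end
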